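/- arXiv:0908.1611 — 3 statements merged into one kernel-verified Lean document; each statement's English description precedes it below -/
import Mathlib

section
/- Let k be a field and let P_4(k) be the subgroup of GL_4(k) consisting of matrices whose third row is (0,0,*,0) and whose first column is (*,0,0,0)^t (i.e., matrices of the shape [[*,*,*,*],[0,*,*,*],[0,0,*,0],[0,*,*,*]]). Let GSp_4(k) be the symplectic similitude group defined by the form J = [[0,1_2],[-1_2,0]], viewed as a subgroup of GL_4(k). Then GL_4(k) is the disjoint union of the two double cosets P_4(k)·GSp_4(k) and P_4(k)·t_1·GSp_4(k), where t_1 is the permutation matrix swapping the first two standard basis vectors. -/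
open Matrix

/-- The symplectic form `J = [[0,1₂],[-1₂,0]]`. -/
def Jsymp (k : Type*) [Field k] : Matrix (Fin 4) (Fin 4) k :=
  !![0, 0, 1, 0; 0, 0, 0, 1; -1, 0, 0, 0; 0, -1, 0, 0]

/-- Membership in the parabolic `P₄(k)` of `GL₄(k)` consisting of invertible matrices of the
shape `[[*,*,*,*],[0,*,*,*],[0,0,*,0],[0,*,*,*]]`. -/
def memP4 {k : Type*} [Field k] (g : Matrix (Fin 4) (Fin 4) k) : Prop :=
  IsUnit g ∧ g 1 0 = 0 ∧ g 2 0 = 0 ∧ g 3 0 = 0 ∧ g 2 1 = 0 ∧ g 2 3 = 0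

/-- Membership in `GSp₄(k) = {g : ᵀg J g = μ(g) J, μ(g) ∈ k^×}`. -/
def memGSp4 {k : Type*} [Field k] (g : Matrix (Fin 4) (Fin 4) k) : Prop :=
  ∃ μ : k, μ ≠ 0 ∧ gᵀ * Jsymp k * g = μ • Jsymp k

/-- The permutation matrix `t₁` swapping the first two standard basis vectors. -/
def t1 (k : Type*) [Field k] : Matrix (Fin 4) (Fin 4) k :=
  !![0, 1, 0, 0; 1, 0, 0, 0; 0, 0, 1, 0; 0, 0, 0, 1]

/-!
Send `g` to its symplectic Gram matrix `N(g) = g J gᵀ`, a nondegenerate alternating matrix.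
Right multiplication by `GSp₄` rescales `N(g)`, and `p ∈ P₄` acts by congruence `N ↦ p N pᵀ`.
Since row 2 of `p` is a multiple of `e₂` and column 0 of `p` a multiple of `e₀`, the condition
`N₁₂ = N₃₂ = 0` (row 2 of `g` is orthogonal to rows 1 and 3) is preserved: it holds for `J` and
fails for `t₁ J t₁ᵀ`, so the two double cosets are disjoint. Conversely, an `N` with
`N₁₂ = N₃₂ = 0` equals `p J pᵀ` for an explicit `p ∈ P₄`, and an `N` with `N₁₂ ≠ 0` is a multiple
of `(p t₁) J (p t₁)ᵀ`; the case `N₁₂ = 0 ≠ N₃₂` reduces to the latter by the transposition of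
`e₁` and `e₃`, which lies in `P₄`.
-/

section SquareMatrix

variable {n k : Type*} [Fintype n] [DecidableEq n] [Field k]

theorem mul_mul_transpose_eq_smul_of_transpose_mul_mul {J h : Matrix n n k} (hJ : J * J = -1)
    {μ : k} (hμ : μ ≠ 0) (e : hᵀ * J * h = μ • J) : h * J * hᵀ = μ • J := by
  -- `hᵀ * (J h J) = -μ`, so `J h J` is, up to the scalar `-μ`, the inverse of `hᵀ`
  have hright : hᵀ * (-μ⁻¹ • (J * h * J)) = 1 := by
    rw [mul_smul_comm, ← Matrix.mul_assoc, ← Matrix.mul_assoc, e, smul_mul_assoc, hJ]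
    simp [hμ]
  have hleft : J * h * J * hᵀ = -μ • 1 := by
    have := mul_eq_one_comm.1 hright
    rw [smul_mul_assoc] at this
    rw [← this, smul_smul]
    simp [hμ]
  calc h * J * hᵀ = -(J * (J * h * J * hᵀ)) := by
        simp only [← Matrix.mul_assoc, hJ, Matrix.neg_mul, Matrix.one_mul, neg_neg]
    _ = μ • J := by rw [hleft]; simp

end SquareMatrix

section Field

variable {k : Type*} [Field k]

theorem Jsymp_mul_Jsymp : Jsymp k * Jsymp k = -1 := by
  ext i j
  fin_cases i <;> fin_cases j <;> simp [Jsymp, mul_apply, Fin.sum_univ_four, one_apply]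

theorem memGSp4_iff_mul_mul_transpose {h : Matrix (Fin 4) (Fin 4) k} :
    memGSp4 h ↔ ∃ μ : k, μ ≠ 0 ∧ h * Jsymp k * hᵀ = μ • Jsymp k := by
  refine exists_congr fun μ => and_congr_right fun hμ => ⟨?_, fun e => ?_⟩
  · exact mul_mul_transpose_eq_smul_of_transpose_mul_mul Jsymp_mul_Jsymp hμ
  · simpa using mul_mul_transpose_eq_smul_of_transpose_mul_mul (h := hᵀ) Jsymp_mul_Jsymp hμ
      (by simpa using e)

def symplecticGram (g : Matrix (Fin 4) (Fin 4) k) : Matrix (Fin 4) (Fin 4) k :=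
  g * Jsymp k * gᵀ

theorem symplecticGram_mul (a b : Matrix (Fin 4) (Fin 4) k) :
    symplecticGram (a * b) = a * symplecticGram b * aᵀ := by
  simp only [symplecticGram, transpose_mul, Matrix.mul_assoc]

theorem isUnit_symplecticGram_iff {g : Matrix (Fin 4) (Fin 4) k} :
    IsUnit (symplecticGram g) ↔ IsUnit g := by
  have hJ : (Jsymp k).det = 1 := by
    simp [Jsymp, det_succ_row_zero, Fin.sum_univ_succ, Fin.succAbove]
  rw [isUnit_iff_isUnit_det, isUnit_iff_isUnit_det g, symplecticGram, det_mul, det_mul, hJ,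
    det_transpose, mul_one, isUnit_mul_self_iff]

theorem symplecticGram_apply_comm (g : Matrix (Fin 4) (Fin 4) k) (i j : Fin 4) :
    symplecticGram g j i = -symplecticGram g i j := by
  have hJ : (Jsymp k)ᵀ = -Jsymp k := by
    ext i j
    fin_cases i <;> fin_cases j <;> simp [Jsymp]
  have hT : (symplecticGram g)ᵀ = -symplecticGram g := by
    rw [symplecticGram, transpose_mul, transpose_mul, transpose_transpose, hJ]
    simp [Matrix.mul_assoc]
  simpa using congr_fun (congr_fun hT i) j

theorem exists_memGSp4_eq_mul_iff {a g : Matrix (Fin 4) (Fin 4) k} (ha : IsUnit a) :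
    (∃ h, memGSp4 h ∧ g = a * h) ↔
      ∃ μ : k, μ ≠ 0 ∧ symplecticGram g = μ • symplecticGram a := by
  constructor
  · rintro ⟨h, hh, rfl⟩
    obtain ⟨μ, hμ, e⟩ := memGSp4_iff_mul_mul_transpose.1 hh
    refine ⟨μ, hμ, ?_⟩
    rw [symplecticGram_mul, symplecticGram, e, symplecticGram]
    simp only [Matrix.mul_smul, Matrix.smul_mul, Matrix.mul_assoc]
  · rintro ⟨μ, hμ, e⟩
    obtain ⟨u, rfl⟩ := ha
    refine ⟨u.inv * g, memGSp4_iff_mul_mul_transpose.2 ⟨μ, hμ, ?_⟩,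
      by rw [← Matrix.mul_assoc, u.val_inv, Matrix.one_mul]⟩
    have hT : u.valᵀ * u.invᵀ = 1 := by rw [← transpose_mul, u.inv_val, transpose_one]
    change symplecticGram (u.inv * g) = _
    rw [symplecticGram_mul, e, symplecticGram]
    simp only [Matrix.mul_smul, Matrix.smul_mul, ← Matrix.mul_assoc, u.inv_val, Matrix.one_mul]
    simp only [Matrix.mul_assoc, hT, Matrix.mul_one]

def alternating4 (a b c d e f : k) : Matrix (Fin 4) (Fin 4) k :=
  !![0, a, b, c; -a, 0, d, e; -b, -d, 0, f; -c, -e, -f, 0]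

theorem symplecticGram_eq_alternating4 (g : Matrix (Fin 4) (Fin 4) k) :
    symplecticGram g = alternating4 (symplecticGram g 0 1) (symplecticGram g 0 2)
      (symplecticGram g 0 3) (symplecticGram g 1 2) (symplecticGram g 1 3)
      (symplecticGram g 2 3) := by
  have hdiag (i : Fin 4) : symplecticGram g i i = 0 := by
    simp [symplecticGram, Jsymp, mul_apply, Fin.sum_univ_four]
    ring
  have hc := symplecticGram_apply_comm g
  ext i j
  fin_cases i <;> fin_cases j <;>
    simp [alternating4, hdiag, hc 0 1, hc 0 2, hc 0 3, hc 1 2, hc 1 3, hc 2 3]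

theorem alternating4_eq_symplecticGram (a b c e : k) :
    alternating4 a b c 0 e 0 =
      symplecticGram !![1, 0, 0, 0; 0, 1, a, 0; 0, 0, b, 0; 0, 0, c, e] := by
  ext i j
  fin_cases i <;> fin_cases j <;>
    simp [alternating4, symplecticGram, Jsymp, mul_apply, Fin.sum_univ_four]

theorem symplecticGram_mul_t1 (a b c d e f : k) :
    symplecticGram (!![1, b, 0, 0; 0, d, 0, d * a; 0, 0, d, 0; 0, -f, e, d * c - b * e] * t1 k) =
      d • alternating4 a b c d e f := by
  ext i j
  fin_cases i <;> fin_cases j <;>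
    simp [alternating4, symplecticGram, Jsymp, t1, mul_apply, Fin.sum_univ_four] <;> ring

theorem symplecticGram_apply_two {q : Matrix (Fin 4) (Fin 4) k} (h0 : q 2 0 = 0)
    (h1 : q 2 1 = 0) (h3 : q 2 3 = 0) (i : Fin 4) : symplecticGram q i 2 = q i 0 * q 2 2 := by
  simp [symplecticGram, Jsymp, mul_apply, Fin.sum_univ_four, h0, h1, h3]

theorem memP4.apply_two_two_ne_zero {p : Matrix (Fin 4) (Fin 4) k} (hp : memP4 p) :
    p 2 2 ≠ 0 := by
  obtain ⟨hu, -, h0, -, h1, h3⟩ := hp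
  intro h2
  refine (isUnit_iff_isUnit_det p).1 hu |>.ne_zero (det_eq_zero_of_row_eq_zero 2 fun j => ?_)
  fin_cases j <;> simp_all

theorem memP4.not_apply_one_one_eq_zero_and_apply_three_one_eq_zero
    {p : Matrix (Fin 4) (Fin 4) k} (hp : memP4 p) : ¬ (p 1 1 = 0 ∧ p 3 1 = 0) := by
  obtain ⟨hu, h10, h20, h30, h21, -⟩ := hp
  rintro ⟨h11, h31⟩
  have hminor : (p.submatrix Fin.succ Fin.succ).det = 0 :=
    det_eq_zero_of_column_eq_zero 0 fun i => by fin_cases i <;> simp [h11, h21, h31]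
  refine (isUnit_iff_isUnit_det p).1 hu |>.ne_zero ?_
  rw [det_succ_column_zero, Fin.sum_univ_four]
  simp [h10, h20, h30, hminor]

theorem memP4.mul {p q : Matrix (Fin 4) (Fin 4) k} (hp : memP4 p) (hq : memP4 q) :
    memP4 (p * q) := by
  obtain ⟨hpu, hp10, hp20, hp30, hp21, hp23⟩ := hp
  obtain ⟨hqu, hq10, hq20, hq30, hq21, hq23⟩ := hq
  refine ⟨hpu.mul hqu, ?_, ?_, ?_, ?_, ?_⟩ <;>
    simp [mul_apply, Fin.sum_univ_four, hp10, hp20, hp30, hp21, hp23, hq10, hq20, hq30, hq21,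
      hq23]

def swap13 (k : Type*) [Field k] : Matrix (Fin 4) (Fin 4) k :=
  !![1, 0, 0, 0; 0, 0, 0, 1; 0, 0, 1, 0; 0, 1, 0, 0]

theorem swap13_mul_swap13 : swap13 k * swap13 k = 1 := by
  ext i j
  fin_cases i <;> fin_cases j <;> simp [swap13, mul_apply, Fin.sum_univ_four, one_apply]

theorem memP4_swap13 : memP4 (swap13 k) :=
  ⟨IsUnit.of_mul_eq_one _ swap13_mul_swap13, by simp [swap13], by simp [swap13],
    by simp [swap13], by simp [swap13], by simp [swap13]⟩

theorem symplecticGram_swap13_mul_apply_one_two (g : Matrix (Fin 4) (Fin 4) k) :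
    symplecticGram (swap13 k * g) 1 2 = symplecticGram g 3 2 := by
  rw [symplecticGram_mul]
  simp [swap13, mul_apply, vecMul, dotProduct, Fin.sum_univ_four]

theorem isUnit_t1 : IsUnit (t1 k) := by
  refine IsUnit.of_mul_eq_one (t1 k) ?_
  ext i j
  fin_cases i <;> fin_cases j <;> simp [t1, mul_apply, Fin.sum_univ_four, one_apply]

theorem exists_memP4_memGSp4_iff {g : Matrix (Fin 4) (Fin 4) k} (hg : IsUnit g) :
    (∃ p h, memP4 p ∧ memGSp4 h ∧ g = p * h) ↔
      symplecticGram g 1 2 = 0 ∧ symplecticGram g 3 2 = 0 := by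
  constructor
  · rintro ⟨p, h, hp, hh, rfl⟩
    obtain ⟨μ, -, e⟩ := (exists_memGSp4_eq_mul_iff hp.1).1 ⟨h, hh, rfl⟩
    obtain ⟨-, h10, h20, h30, h21, h23⟩ := hp
    simp [e, symplecticGram_apply_two h20 h21 h23, h10, h30]
  · rintro ⟨h12, h32⟩
    have h23 : symplecticGram g 2 3 = 0 := by rw [symplecticGram_apply_comm, h32, neg_zero]
    set p : Matrix (Fin 4) (Fin 4) k := !![1, 0, 0, 0; 0, 1, symplecticGram g 0 1, 0;
      0, 0, symplecticGram g 0 2, 0; 0, 0, symplecticGram g 0 3, symplecticGram g 1 3]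
    have hgp : symplecticGram g = symplecticGram p := by
      rw [symplecticGram_eq_alternating4 g, h12, h23, alternating4_eq_symplecticGram]
    have hpu : IsUnit p := isUnit_symplecticGram_iff.1 (hgp ▸ isUnit_symplecticGram_iff.2 hg)
    obtain ⟨h, hh, e⟩ :=
      (exists_memGSp4_eq_mul_iff hpu).2 ⟨1, one_ne_zero, by rw [hgp, one_smul]⟩
    exact ⟨p, h, ⟨hpu, by simp [p], by simp [p], by simp [p], by simp [p], by simp [p]⟩, hh, e⟩

theorem exists_memP4_t1_memGSp4_of_one_two_ne_zero {g : Matrix (Fin 4) (Fin 4) k}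
    (hg : IsUnit g) (h12 : symplecticGram g 1 2 ≠ 0) :
    ∃ p h, memP4 p ∧ memGSp4 h ∧ g = p * t1 k * h := by
  obtain ⟨N, hN⟩ : ∃ N, symplecticGram g = N := ⟨_, rfl⟩
  have hNalt := symplecticGram_eq_alternating4 g
  have hNu : IsUnit N := hN ▸ isUnit_symplecticGram_iff.2 hg
  rw [hN] at hNalt h12
  set p : Matrix (Fin 4) (Fin 4) k := !![1, N 0 2, 0, 0; 0, N 1 2, 0, N 1 2 * N 0 1;
    0, 0, N 1 2, 0; 0, -N 2 3, N 1 3, N 1 2 * N 0 3 - N 0 2 * N 1 3]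
  have hgp : symplecticGram (p * t1 k) = N 1 2 • N := by
    rw [symplecticGram_mul_t1, ← hNalt]
  have hpu : IsUnit (p * t1 k) := isUnit_symplecticGram_iff.1
    (hgp ▸ IsUnit.smul (Units.mk0 _ h12) hNu)
  obtain ⟨h, hh, e⟩ := (exists_memGSp4_eq_mul_iff (g := g) hpu).2
    ⟨(N 1 2)⁻¹, inv_ne_zero h12, by rw [hgp, smul_smul, inv_mul_cancel₀ h12, one_smul, hN]⟩
  exact ⟨p, h, ⟨isUnit_of_mul_isUnit_left hpu, by simp [p], by simp [p], by simp [p],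
    by simp [p], by simp [p]⟩, hh, e⟩

theorem exists_memP4_t1_memGSp4_iff {g : Matrix (Fin 4) (Fin 4) k} (hg : IsUnit g) :
    (∃ p h, memP4 p ∧ memGSp4 h ∧ g = p * t1 k * h) ↔
      ¬ (symplecticGram g 1 2 = 0 ∧ symplecticGram g 3 2 = 0) := by
  constructor
  · rintro ⟨p, h, hp, hh, rfl⟩ ⟨h12, h32⟩
    obtain ⟨μ, hμ, e⟩ := (exists_memGSp4_eq_mul_iff (hp.1.mul isUnit_t1)).1 ⟨h, hh, rfl⟩
    have hgram (i : Fin 4) : symplecticGram (p * t1 k) i 2 = p i 1 * p 2 2 := by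
      obtain ⟨-, -, h20, -, h21, h23⟩ := hp
      rw [symplecticGram_apply_two] <;> simp [t1, mul_apply, Fin.sum_univ_four, h20, h21, h23]
    have hp22 := hp.apply_two_two_ne_zero
    rw [e, Matrix.smul_apply, hgram] at h12 h32
    exact hp.not_apply_one_one_eq_zero_and_apply_three_one_eq_zero
      ⟨by simpa [hμ, hp22] using h12, by simpa [hμ, hp22] using h32⟩
  · intro hsplit
    by_cases h12 : symplecticGram g 1 2 = 0
    · have h32 : symplecticGram g 3 2 ≠ 0 := fun h32 => hsplit ⟨h12, h32⟩
      obtain ⟨p, h, hp, hh, e⟩ := exists_memP4_t1_memGSp4_of_one_two_ne_zero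
        (memP4_swap13.1.mul hg)
        (by rwa [symplecticGram_swap13_mul_apply_one_two])
      refine ⟨swap13 k * p, h, memP4_swap13.mul hp, hh, ?_⟩
      rw [Matrix.mul_assoc, Matrix.mul_assoc, ← Matrix.mul_assoc p, ← e, ← Matrix.mul_assoc,
        swap13_mul_swap13, Matrix.one_mul]
    · exact exists_memP4_t1_memGSp4_of_one_two_ne_zero hg h12

end Field

/-- `GL₄(k)` is the disjoint union of the double cosets `P₄(k)·GSp₄(k)` and
`P₄(k)·t₁·GSp₄(k)`: every invertible `g` lies in exactly one of the two. -/
theorem GL4_eq_two_double_cosets {k : Type*} [Field k]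
    (g : Matrix (Fin 4) (Fin 4) k) (hg : IsUnit g) :
    Xor' (∃ p h : Matrix (Fin 4) (Fin 4) k, memP4 p ∧ memGSp4 h ∧ g = p * h)
      (∃ p h : Matrix (Fin 4) (Fin 4) k, memP4 p ∧ memGSp4 h ∧ g = p * t1 k * h) := by
  rw [exists_memP4_memGSp4_iff hg, exists_memP4_t1_memGSp4_iff hg]
  exact xor_not_right.2 Iff.rfl
end

section
/- Let F = ℝ, L = ℂ. Let K_∞ = {[[A,B],[-B,A]] : A,B ∈ M_2(ℂ), ^t Ā B = ^t B̄ A, ^t Ā A + ^t B̄ B = 1} be the maximal compact subgroup of GU(2,2;ℂ)^+ stabilizing I = diag(i,i) in ℍ_2. Then the intersection of M^{(1)}(ℝ)M^{(2)}(ℝ)N(ℝ) with K_∞ consists exactly of the matrices diag-block(ζ; α,β block) of the form with diagonal entries ζ, α, ζ, α and (2,4)-entry β, (4,2)-entry −β, where ζ, α, β ∈ ℂ satisfy |ζ| = 1, |α|² + |β|² = 1 and αβ̄ = βᾱ. -/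
open Matrix Complex

noncomputable section

local notation "conj'" => starRingEnd ℂ

/-- The form `J = [[0,1₂],[-1₂,0]]`. -/
def JGU : Matrix (Fin 4) (Fin 4) ℂ :=
  !![0, 0, 1, 0; 0, 0, 0, 1; -1, 0, 0, 0; 0, -1, 0, 0]

/-- An element of `M^{(1)}(ℝ)`. -/
def M1mat (ζ : ℂ) : Matrix (Fin 4) (Fin 4) ℂ :=
  !![ζ, 0, 0, 0; 0, 1, 0, 0; 0, 0, (conj' ζ)⁻¹, 0; 0, 0, 0, 1]

/-- The shape of an element of `M^{(2)}(ℝ) ≅ GU(1,1;ℂ)(ℝ)` inside `GU(2,2;ℂ)`. -/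
def M2mat (a b c d : ℂ) (μ : ℝ) : Matrix (Fin 4) (Fin 4) ℂ :=
  !![1, 0, 0, 0; 0, a, 0, b; 0, 0, (μ : ℂ), 0; 0, c, 0, d]

/-- An element of the unipotent radical `N(ℝ)`, with `z, y ∈ ℂ`, `w ∈ ℝ`. -/
def Nmat (z y : ℂ) (w : ℝ) : Matrix (Fin 4) (Fin 4) ℂ :=
  !![1, z, 0, 0; 0, 1, 0, 0; 0, 0, 1, 0; 0, 0, -conj' z, 1] *
    !![1, 0, (w : ℂ), y; 0, 1, conj' y, 0; 0, 0, 1, 0; 0, 0, 0, 1]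

/-- The set `M^{(1)}(ℝ)M^{(2)}(ℝ)N(ℝ)`. -/
def MMN : Set (Matrix (Fin 4) (Fin 4) ℂ) :=
  {g | ∃ (ζ : ℂ), ζ ≠ 0 ∧ ∃ (a b c d : ℂ) (μ : ℝ), μ ≠ 0 ∧
    (μ : ℂ) = conj' a * d - b * conj' c ∧
    ((M2mat a b c d μ).map conj')ᵀ * JGU * M2mat a b c d μ = (μ : ℂ) • JGU ∧
    ∃ (z y : ℂ) (w : ℝ), g = M1mat ζ * M2mat a b c d μ * Nmat z y w}

/-- The reconciliation of blocks: view `fromBlocks` as a `Fin 4` matrix. -/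
def fromBlocks4 (A B C D : Matrix (Fin 2) (Fin 2) ℂ) : Matrix (Fin 4) (Fin 4) ℂ :=
  (Matrix.fromBlocks A B C D).submatrix (finSumFinEquiv (m := 2) (n := 2)).symm
    (finSumFinEquiv (m := 2) (n := 2)).symm

/-- The set `K_∞` as `Fin 4` matrices. -/
def KinfSet : Set (Matrix (Fin 4) (Fin 4) ℂ) :=
  {g | ∃ A B : Matrix (Fin 2) (Fin 2) ℂ,
    g = fromBlocks4 A B (-B) A ∧ Aᴴ * B = Bᴴ * A ∧ Aᴴ * A + Bᴴ * B = 1}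

/-- The right-hand side of the intersection formula. -/
def MMNKtarget : Set (Matrix (Fin 4) (Fin 4) ℂ) :=
  {g | ∃ ζ α β : ℂ,
    g = !![ζ, 0, 0, 0; 0, α, 0, β; 0, 0, ζ, 0; 0, -β, 0, α] ∧
    Complex.normSq ζ = 1 ∧ Complex.normSq α + Complex.normSq β = 1 ∧
    α * conj' β = β * conj' α}


/-!
Every element of `M^{(1)}M^{(2)}N` has zero entries at the (0-indexed) positions
`(1,0), (2,0), (2,1), (2,3), (3,0)`. For `[[A, B], [-B, A]] ∈ K_∞` these zeros force
`A = diag(ζ, α)` and `B = diag(0, β)`, and the relations `ĀᵗB = B̄ᵗA`, `ĀᵗA + B̄ᵗB = 1`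
become exactly the conditions on `ζ, α, β`. Conversely, such a matrix is
`M1mat ζ * M2mat α β (-β) α 1`, because `|ζ| = 1` gives `ζ̄⁻¹ = ζ` and
`[[α, β], [-β, α]]` lies in `GU(1,1)` with multiplier `1`.
-/

theorem M1mat_mul_M2mat_mul_Nmat (ζ a b c d : ℂ) (μ : ℝ) (z y : ℂ) (w : ℝ) :
    M1mat ζ * M2mat a b c d μ * Nmat z y w =
      !![ζ, ζ * z, ζ * (w + z * conj' y), ζ * y;
        0, a, a * conj' y - b * conj' z, b;
        0, 0, (conj' ζ)⁻¹ * μ, 0;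
        0, c, c * conj' y - d * conj' z, d] := by
  ext i j
  fin_cases i <;> fin_cases j <;>
    simp [M1mat, M2mat, Nmat, Matrix.mul_apply, Fin.sum_univ_four] <;> ring

theorem fromBlocks4_eq (A B C D : Matrix (Fin 2) (Fin 2) ℂ) :
    fromBlocks4 A B C D =
      !![A 0 0, A 0 1, B 0 0, B 0 1; A 1 0, A 1 1, B 1 0, B 1 1;
        C 0 0, C 0 1, D 0 0, D 0 1; C 1 0, C 1 1, D 1 0, D 1 1] := by
  ext i j
  fin_cases i <;> fin_cases j <;> rfl

theorem M2mat_mem_GU {a b c d : ℂ} {μ : ℝ} (hac : conj' a * c = conj' c * a)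
    (hbd : conj' b * d = conj' d * b) (hμ : conj' a * d - conj' c * b = μ) :
    ((M2mat a b c d μ).map conj')ᵀ * JGU * M2mat a b c d μ = (μ : ℂ) • JGU := by
  have hμ' : conj' d * a - conj' b * c = μ := by
    simpa [mul_comm] using congrArg conj' hμ
  ext i j
  fin_cases i <;> fin_cases j <;>
    simp [M2mat, JGU, Matrix.mul_apply, Fin.sum_univ_four] <;>
    first
      | linear_combination hac
      | linear_combination hbd
      | linear_combination hμ
      | linear_combination -hμ'

theorem entries_eq_zero_of_mem_MMN {g : Matrix (Fin 4) (Fin 4) ℂ} (hg : g ∈ MMN) :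
    g 1 0 = 0 ∧ g 2 0 = 0 ∧ g 2 1 = 0 ∧ g 2 3 = 0 ∧ g 3 0 = 0 := by
  obtain ⟨ζ, -, a, b, c, d, μ, -, -, -, z, y, w, rfl⟩ := hg
  simp [M1mat_mul_M2mat_mul_Nmat]

theorem diag_conjTranspose_mul_comm_iff (ζ α β : ℂ) :
    !![ζ, 0; 0, α]ᴴ * !![0, 0; 0, β] = !![0, 0; 0, β]ᴴ * !![ζ, 0; 0, α] ↔
      α * conj' β = β * conj' α := by
  rw [← Matrix.ext_iff, ← (starRingEnd ℂ).injective.eq_iff]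
  simp [Fin.forall_fin_two, Matrix.mul_apply, mul_comm]

theorem diag_conjTranspose_mul_add_eq_one_iff (ζ α β : ℂ) :
    !![ζ, 0; 0, α]ᴴ * !![ζ, 0; 0, α] + !![0, 0; 0, β]ᴴ * !![0, 0; 0, β] = 1 ↔
      normSq ζ = 1 ∧ normSq α + normSq β = 1 := by
  rw [← Matrix.ext_iff]
  simp [Fin.forall_fin_two, Matrix.mul_apply, ← normSq_eq_conj_mul_self, ← ofReal_add]

theorem mem_MMNKtarget_of_mem_KinfSet {g : Matrix (Fin 4) (Fin 4) ℂ} (hg : g ∈ KinfSet)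
    (hzero : g 1 0 = 0 ∧ g 2 0 = 0 ∧ g 2 1 = 0 ∧ g 2 3 = 0 ∧ g 3 0 = 0) : g ∈ MMNKtarget := by
  obtain ⟨A, B, rfl, hAB, hAA⟩ := hg
  obtain ⟨hA10, hB00, hB01, hA01, hB10⟩ := hzero
  simp only [fromBlocks4_eq, of_apply, cons_val', cons_val, cons_val_zero, cons_val_one,
    empty_val', cons_val_fin_one, Matrix.neg_apply, neg_eq_zero] at hA10 hB00 hB01 hA01 hB10
  have hA : A = !![A 0 0, 0; 0, A 1 1] := by
    ext i j; fin_cases i <;> fin_cases j <;> simp [hA10, hA01]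
  have hB : B = !![0, 0; 0, B 1 1] := by
    ext i j; fin_cases i <;> fin_cases j <;> simp [hB00, hB01, hB10]
  rw [hA, hB, diag_conjTranspose_mul_comm_iff] at hAB
  rw [hA, hB, diag_conjTranspose_mul_add_eq_one_iff] at hAA
  refine ⟨A 0 0, A 1 1, B 1 1, ?_, hAA.1, hAA.2, hAB⟩
  ext i j; fin_cases i <;> fin_cases j <;> simp [fromBlocks4_eq, hA10, hA01, hB00, hB01, hB10]

theorem MMNKtarget_subset_KinfSet : MMNKtarget ⊆ KinfSet := by
  rintro g ⟨ζ, α, β, rfl, hζ, hαβ, hcomm⟩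
  refine ⟨!![ζ, 0; 0, α], !![0, 0; 0, β], ?_,
    (diag_conjTranspose_mul_comm_iff ζ α β).mpr hcomm,
    (diag_conjTranspose_mul_add_eq_one_iff ζ α β).mpr ⟨hζ, hαβ⟩⟩
  ext i j; fin_cases i <;> fin_cases j <;> simp [fromBlocks4_eq]

theorem MMNKtarget_subset_MMN : MMNKtarget ⊆ MMN := by
  rintro g ⟨ζ, α, β, rfl, hζ, hαβ, hcomm⟩
  have hζ0 : ζ ≠ 0 := by rintro rfl; simp at hζ
  have hζinv : (conj' ζ)⁻¹ = ζ := by simp [Complex.inv_def, hζ]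
  have hαβ' : conj' α * α + conj' β * β = 1 := by
    simp only [← normSq_eq_conj_mul_self]; exact_mod_cast hαβ
  have hcomm' : conj' α * β = conj' β * α := by
    simpa [mul_comm] using congrArg conj' hcomm
  refine ⟨ζ, hζ0, α, β, -β, α, 1, one_ne_zero, ?_, M2mat_mem_GU ?_ ?_ ?_, 0, 0, 0, ?_⟩
  · simp only [map_neg, ofReal_one]; linear_combination -hαβ'
  · simp [hcomm']
  · rw [hcomm']
  · simp only [map_neg, ofReal_one]; linear_combination hαβ'
  · ext i j; fin_cases i <;> fin_cases j <;> simp [M1mat_mul_M2mat_mul_Nmat, hζinv]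

/-- `M^{(1)}(ℝ)M^{(2)}(ℝ)N(ℝ) ∩ K_∞` consists exactly of the matrices
`diag(ζ,α,ζ,α)` with `(2,4)`-entry `β` and `(4,2)`-entry `-β`, where `|ζ| = 1`,
`|α|² + |β|² = 1` and `αβ̄ = βᾱ`. -/
theorem MMN_inter_Kinf : MMN ∩ KinfSet = MMNKtarget :=
  Set.Subset.antisymm
    (fun _ ⟨hM, hK⟩ => mem_MMNKtarget_of_mem_KinfSet hK (entries_eq_zero_of_mem_MMN hM))
    (fun _ hg => ⟨MMNKtarget_subset_MMN hg, MMNKtarget_subset_KinfSet hg⟩)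

end
end

section
/- Let G = GU(2,2;L) over a non-archimedean local field F, K^G = G(F) ∩ GL_4(𝔬_L), K^H = GSp_4(𝔬), P the Siegel-type non-abelian-radical maximal parabolic, and for m ≥ 0 let η_m be the unipotent matrix with (2,1)-entry αϖ^m and (3,4)-entry −ᾱϖ^m (identity elsewhere), and η_∞ = 1. Then the double cosets P(𝔬)η_m K^H for m ∈ {0,1,2,…,∞} are pairwise disjoint subsets of K^G. In particular, for g = p η_m k with p ∈ P(𝔬), k ∈ K^H, the minimum of the valuations of the (3,2)- and (3,4)-entries of gJ ^t g equals m plus a constant independent of p and k. -/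
open Matrix

noncomputable section

/-- The form `J = [[0,1₂],[-1₂,0]]` over a field `L`. -/
def Jmat (L : Type*) [Field L] : Matrix (Fin 4) (Fin 4) L :=
  !![0, 0, 1, 0; 0, 0, 0, 1; -1, 0, 0, 0; 0, -1, 0, 0]

/-- The unipotent element `η_m`, with `(2,1)`-entry `αϖ^m` and `(3,4)`-entry `-ᾱϖ^m`. -/
def etaMat {L : Type*} [Field L] (σ : L →+* L) (α ϖ : L) (m : ℕ) :
    Matrix (Fin 4) (Fin 4) L :=
  !![1, 0, 0, 0;
     α * ϖ ^ m, 1, 0, 0;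
     0, 0, 1, -(σ α) * ϖ ^ m;
     0, 0, 0, 1]

/-- An element of `P(𝔬)` in the coordinates `m(ζ; a,b,c,d)·n(z)·n(x,y)` used in
Lemma `etamdisjointnesslemma`; here `ξ = ζ̄⁻¹` and `μ = ād - bc̄`. -/
def Pelt {L : Type*} [Field L] (σ : L →+* L) (ζ ξ a b c d z x y : L) :
    Matrix (Fin 4) (Fin 4) L :=
  !![ζ, 0, 0, 0; 0, a, 0, b; 0, 0, (σ a * d - b * σ c) * ξ, 0; 0, c, 0, d] *
  !![1, z, 0, 0; 0, 1, 0, 0; 0, 0, 1, 0; 0, 0, -(σ z), 1] *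
  !![1, 0, x, y; 0, 1, σ y, 0; 0, 0, 1, 0; 0, 0, 0, 1]

/-- The `P(𝔬)`-conditions on the coordinates: `ζ` a unit of `𝔬_L`, `ξ = ζ̄⁻¹`,
`a,b,c,d ∈ 𝔬_L` with `μ = ād - bc̄ ∈ 𝔬_L^×` and at least one of `a, c` a unit,
`z, y ∈ 𝔬_L`, `x ∈ 𝔬 = 𝔬_L ∩ F`. -/
def PIntegral {L : Type*} [Field L] (σ : L →+* L) (v : L → WithTop ℤ)
    (ζ ξ a b c d z x y : L) : Prop :=
  v ζ = 0 ∧ σ ζ * ξ = 1 ∧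
  0 ≤ v a ∧ 0 ≤ v b ∧ 0 ≤ v c ∧ 0 ≤ v d ∧
  min (v a) (v c) = 0 ∧ v (σ a * d - b * σ c) = 0 ∧
  0 ≤ v z ∧ 0 ≤ v y ∧ 0 ≤ v x ∧ σ x = x

/-- The `K^H = GSp₄(𝔬)`-conditions: entries in `𝔬 = 𝔬_L ∩ F`, and
`kJᵀk = μ(k)J` with `μ(k)` a unit. -/
def KHIntegral {L : Type*} [Field L] (σ : L →+* L) (v : L → WithTop ℤ)
    (k : Matrix (Fin 4) (Fin 4) L) : Prop :=
  (∀ i j, σ (k i j) = k i j) ∧ (∀ i j, 0 ≤ v (k i j)) ∧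
  ∃ μk : L, v μk = 0 ∧ k * Jmat L * kᵀ = μk • Jmat L

/-!
The form `g ↦ g J gᵀ` is multiplied by the unit similitude factor when `g` is multiplied on the
right by `k ∈ K^H`, so the valuations of its `(3,2)`- and `(3,4)`-entries do not see `k`. For
`g = p η(t)` with `p ∈ P(𝔬)` a direct computation gives these entries as `a·R` and `c·R` with
`R = μ ζ̄⁻¹ t (ᾱ - α)`; since one of `a, c` is a unit, the smaller valuation is `v R`, i.e.
`m·v(ϖ) + v(ᾱ - α)` for `t = ϖ^m`, and `⊤` for `t = 0` (the coset `P(𝔬)K^H`).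
-/

namespace Matrix

theorem mul_mul_mul_transpose_of_similitude {n R : Type*} [Fintype n] [CommRing R]
    {J k : Matrix n n R} {μ : R} (hk : k * J * kᵀ = μ • J) (q : Matrix n n R) :
    q * k * J * (q * k)ᵀ = μ • (q * J * qᵀ) := by
  calc q * k * J * (q * k)ᵀ = q * (k * J * kᵀ) * qᵀ := by
        simp only [transpose_mul, Matrix.mul_assoc]
    _ = μ • (q * J * qᵀ) := by rw [hk, Matrix.mul_smul, Matrix.smul_mul]

end Matrix

section Computation

variable {L : Type*} [Field L] (σ : L →+* L)

def etaUnip (α t : L) : Matrix (Fin 4) (Fin 4) L :=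
  !![1, 0, 0, 0;
     α * t, 1, 0, 0;
     0, 0, 1, -(σ α) * t;
     0, 0, 0, 1]

theorem etaMat_eq_etaUnip (α ϖ : L) (m : ℕ) : etaMat σ α ϖ m = etaUnip σ α (ϖ ^ m) := rfl

theorem etaUnip_zero (α : L) : etaUnip σ α 0 = 1 := by
  ext i j
  fin_cases i <;> fin_cases j <;> simp [etaUnip]

variable (ζ ξ a b c d z x y α t : L)

theorem Pelt_mul_etaUnip_form_apply_two_one :
    (Pelt σ ζ ξ a b c d z x y * etaUnip σ α t * Jmat L *
      (Pelt σ ζ ξ a b c d z x y * etaUnip σ α t)ᵀ) 2 1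
      = a * ((σ a * d - b * σ c) * ξ * (t * (σ α - α))) := by
  simp [Pelt, etaUnip, Jmat, mul_apply, Fin.sum_univ_four]
  ring

theorem Pelt_mul_etaUnip_form_apply_two_three :
    (Pelt σ ζ ξ a b c d z x y * etaUnip σ α t * Jmat L *
      (Pelt σ ζ ξ a b c d z x y * etaUnip σ α t)ᵀ) 2 3
      = c * ((σ a * d - b * σ c) * ξ * (t * (σ α - α))) := by
  simp [Pelt, etaUnip, Jmat, mul_apply, Fin.sum_univ_four]
  ring

end Computation

section Valuation

variable {L : Type*} [Field L] {v : L → WithTop ℤ}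

theorem val_eq_zero_of_mul_eq_one (hvm : ∀ x y, v (x * y) = v x + v y) (hv1 : v 1 = 0)
    {u w : L} (hu : v u = 0) (huw : u * w = 1) : v w = 0 := by
  have h := congrArg v huw
  rwa [hvm, hu, zero_add, hv1] at h

theorem val_pow (hvm : ∀ x y, v (x * y) = v x + v y) (hv1 : v 1 = 0)
    {ϖ : L} {e : ℤ} (hϖ : v ϖ = e) (m : ℕ) : v (ϖ ^ m) = ((m * e : ℤ) : WithTop ℤ) := by
  induction m with
  | zero => simpa using hv1
  | succ n ih =>
    rw [pow_succ, hvm, ih, hϖ, ← WithTop.coe_add]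
    congr 1
    push_cast
    ring

theorem min_val_mul_right (hvm : ∀ x y, v (x * y) = v x + v y)
    {a c : L} (hac : min (v a) (v c) = 0) (r : L) : min (v (a * r)) (v (c * r)) = v r := by
  rw [hvm, hvm, min_add_add_right, hac, zero_add]

end Valuation

section DoubleCosets

variable {L : Type*} [Field L] {σ : L →+* L} {v : L → WithTop ℤ}

theorem min_val_form_Pelt_mul_etaUnip_mul
    (hvm : ∀ x y, v (x * y) = v x + v y) (hv1 : v 1 = 0) (hvσ : ∀ x, v (σ x) = v x)
    {ζ ξ a b c d z x y : L} (hP : PIntegral σ v ζ ξ a b c d z x y)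
    {k : Matrix (Fin 4) (Fin 4) L} (hK : KHIntegral σ v k) (α t : L) :
    let g := Pelt σ ζ ξ a b c d z x y * etaUnip σ α t * k
    min (v ((g * Jmat L * gᵀ) 2 1)) (v ((g * Jmat L * gᵀ) 2 3)) = v (t * (σ α - α)) := by
  obtain ⟨hζ, hζξ, -, -, -, -, hac, hμ, -⟩ := hP
  obtain ⟨-, -, μk, hμk, hk⟩ := hK
  have hξ : v ξ = 0 := val_eq_zero_of_mul_eq_one hvm hv1 ((hvσ ζ).trans hζ) hζξ
  intro g
  simp only [g, Matrix.mul_mul_mul_transpose_of_similitude hk, Matrix.smul_apply, smul_eq_mul,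
    Pelt_mul_etaUnip_form_apply_two_one, Pelt_mul_etaUnip_form_apply_two_three, hvm μk, hμk,
    zero_add]
  rw [min_val_mul_right hvm hac, hvm, hvm, hμ, hξ, zero_add, zero_add]

theorem min_val_form_Pelt_mul_etaMat_mul
    (hvm : ∀ x y, v (x * y) = v x + v y) (hv1 : v 1 = 0) (hvσ : ∀ x, v (σ x) = v x)
    (α ϖ : L) {e : ℤ} (hϖ : v ϖ = e) {c₀ : ℤ} (hα : v (σ α - α) = c₀)
    (m : ℕ) (ζ ξ a b c d z x y : L) (k : Matrix (Fin 4) (Fin 4) L)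
    (hP : PIntegral σ v ζ ξ a b c d z x y) (hK : KHIntegral σ v k) :
    let g := Pelt σ ζ ξ a b c d z x y * etaMat σ α ϖ m * k
    min (v ((g * Jmat L * gᵀ) 2 1)) (v ((g * Jmat L * gᵀ) 2 3)) = ((m : ℤ) * e + c₀ : ℤ) := by
  have h := min_val_form_Pelt_mul_etaUnip_mul hvm hv1 hvσ hP hK α (ϖ ^ m)
  rwa [hvm, val_pow hvm hv1 hϖ, hα, ← WithTop.coe_add] at h

theorem form_Pelt_apply_eq_zero (ζ ξ a b c d z x y : L) :
    (Pelt σ ζ ξ a b c d z x y * Jmat L * (Pelt σ ζ ξ a b c d z x y)ᵀ) 2 1 = 0 ∧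
    (Pelt σ ζ ξ a b c d z x y * Jmat L * (Pelt σ ζ ξ a b c d z x y)ᵀ) 2 3 = 0 := by
  have h21 := Pelt_mul_etaUnip_form_apply_two_one σ ζ ξ a b c d z x y 0 0
  have h23 := Pelt_mul_etaUnip_form_apply_two_three σ ζ ξ a b c d z x y 0 0
  simp only [etaUnip_zero, Matrix.mul_one, zero_mul, mul_zero] at h21 h23
  exact ⟨h21, h23⟩

end DoubleCosets

theorem etam_double_cosets_disjoint_general {L : Type*} [Field L]
    (σ : L →+* L)
    (v : L → WithTop ℤ)
    (hv0 : ∀ x, v x = ⊤ ↔ x = 0)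
    (hvm : ∀ x y, v (x * y) = v x + v y)
    (hv1 : v 1 = 0)
    (hvσ : ∀ x, v (σ x) = v x)
    (α ϖ : L) (e : ℤ) (he : 0 < e) (hϖ : v ϖ = (e : WithTop ℤ))
    (c₀ : ℤ) (hα : v (σ α - α) = (c₀ : WithTop ℤ)) :
    -- the valuation formula
    (∀ (m : ℕ) (ζ ξ a b c d z x y : L) (k : Matrix (Fin 4) (Fin 4) L),
      PIntegral σ v ζ ξ a b c d z x y → KHIntegral σ v k →
      (let g := Pelt σ ζ ξ a b c d z x y * etaMat σ α ϖ m * k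
       min (v ((g * Jmat L * gᵀ) 2 1)) (v ((g * Jmat L * gᵀ) 2 3))
         = ((m : ℤ) * e + c₀ : ℤ))) ∧
    -- pairwise disjointness of the double cosets `P(𝔬)η_m K^H`, `m ∈ {0,1,2,…}`
    (∀ (m m' : ℕ) (ζ ξ a b c d z x y ζ' ξ' a' b' c' d' z' x' y' : L)
      (k k' : Matrix (Fin 4) (Fin 4) L),
      PIntegral σ v ζ ξ a b c d z x y → KHIntegral σ v k →
      PIntegral σ v ζ' ξ' a' b' c' d' z' x' y' → KHIntegral σ v k' →
      Pelt σ ζ ξ a b c d z x y * etaMat σ α ϖ m * k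
        = Pelt σ ζ' ξ' a' b' c' d' z' x' y' * etaMat σ α ϖ m' * k' →
      m = m') ∧
    -- disjointness from the coset `P(𝔬)η_∞K^H = P(𝔬)K^H`
    (∀ (m : ℕ) (ζ ξ a b c d z x y ζ' ξ' a' b' c' d' z' x' y' : L)
      (k k' : Matrix (Fin 4) (Fin 4) L),
      PIntegral σ v ζ ξ a b c d z x y → KHIntegral σ v k →
      PIntegral σ v ζ' ξ' a' b' c' d' z' x' y' → KHIntegral σ v k' →
      Pelt σ ζ ξ a b c d z x y * etaMat σ α ϖ m * k
        ≠ Pelt σ ζ' ξ' a' b' c' d' z' x' y' * k') := by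
  have formula := min_val_form_Pelt_mul_etaMat_mul hvm hv1 hvσ α ϖ hϖ hα
  refine ⟨formula, ?_, ?_⟩
  · intro m m' ζ ξ a b c d z x y ζ' ξ' a' b' c' d' z' x' y' k k' hP hK hP' hK' heq
    have hval := (formula m ζ ξ a b c d z x y k hP hK).symm.trans
      (heq ▸ formula m' ζ' ξ' a' b' c' d' z' x' y' k' hP' hK')
    have : (m : ℤ) * e = m' * e := add_right_cancel (WithTop.coe_inj.mp hval)
    exact_mod_cast mul_right_cancel₀ he.ne' this
  · intro m ζ ξ a b c d z x y ζ' ξ' a' b' c' d' z' x' y' k k' hP hK _ hK' heq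
    obtain ⟨-, -, μk, -, hk⟩ := hK'
    obtain ⟨h21, h23⟩ := form_Pelt_apply_eq_zero (σ := σ) ζ' ξ' a' b' c' d' z' x' y'
    have hval := formula m ζ ξ a b c d z x y k hP hK
    simp only [heq, Matrix.mul_mul_mul_transpose_of_similitude hk, Matrix.smul_apply, h21, h23,
      smul_zero, (hv0 0).mpr rfl, min_self] at hval
    exact WithTop.top_ne_coe hval

/-- Lemma `etamdisjointnesslemma` i): the double cosets `P(𝔬)η_m K^H ⊆ K^G` are pairwise
disjoint, because for `g = p η_m k` the minimum of the valuations of the `(3,2)`- and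
`(3,4)`-entries of `gJᵀg` equals `m·v(ϖ)` plus the constant `v(ᾱ - α)`, independent of
`p` and `k`; moreover `P(𝔬)K^H` (the case `m = ∞`) is disjoint from all of these. -/
theorem etam_double_cosets_disjoint {L : Type*} [Field L]
    (σ : L →+* L) (hσ : ∀ x, σ (σ x) = x)
    (v : L → WithTop ℤ)
    (hv0 : ∀ x, v x = ⊤ ↔ x = 0)
    (hvm : ∀ x y, v (x * y) = v x + v y)
    (hva : ∀ x y, min (v x) (v y) ≤ v (x + y))
    (hv1 : v 1 = 0)
    (hvσ : ∀ x, v (σ x) = v x)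
    (α ϖ : L) (e : ℤ) (he : 0 < e) (hϖ : v ϖ = (e : WithTop ℤ)) (hϖF : σ ϖ = ϖ)
    (c₀ : ℤ) (hα : v (σ α - α) = (c₀ : WithTop ℤ)) :
    -- the valuation formula
    (∀ (m : ℕ) (ζ ξ a b c d z x y : L) (k : Matrix (Fin 4) (Fin 4) L),
      PIntegral σ v ζ ξ a b c d z x y → KHIntegral σ v k →
      (let g := Pelt σ ζ ξ a b c d z x y * etaMat σ α ϖ m * k
       min (v ((g * Jmat L * gᵀ) 2 1)) (v ((g * Jmat L * gᵀ) 2 3))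
         = ((m : ℤ) * e + c₀ : ℤ))) ∧
    -- pairwise disjointness of the double cosets `P(𝔬)η_m K^H`, `m ∈ {0,1,2,…}`
    (∀ (m m' : ℕ) (ζ ξ a b c d z x y ζ' ξ' a' b' c' d' z' x' y' : L)
      (k k' : Matrix (Fin 4) (Fin 4) L),
      PIntegral σ v ζ ξ a b c d z x y → KHIntegral σ v k →
      PIntegral σ v ζ' ξ' a' b' c' d' z' x' y' → KHIntegral σ v k' →
      Pelt σ ζ ξ a b c d z x y * etaMat σ α ϖ m * k
        = Pelt σ ζ' ξ' a' b' c' d' z' x' y' * etaMat σ α ϖ m' * k' →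
      m = m') ∧
    -- disjointness from the coset `P(𝔬)η_∞K^H = P(𝔬)K^H`
    (∀ (m : ℕ) (ζ ξ a b c d z x y ζ' ξ' a' b' c' d' z' x' y' : L)
      (k k' : Matrix (Fin 4) (Fin 4) L),
      PIntegral σ v ζ ξ a b c d z x y → KHIntegral σ v k →
      PIntegral σ v ζ' ξ' a' b' c' d' z' x' y' → KHIntegral σ v k' →
      Pelt σ ζ ξ a b c d z x y * etaMat σ α ϖ m * k
        ≠ Pelt σ ζ' ξ' a' b' c' d' z' x' y' * k') :=
  etam_double_cosets_disjoint_general σ v hv0 hvm hv1 hvσ α ϖ e he hϖ c₀ hα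
end
end
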